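/- Let {b(k), b*(k), c(k), c*(k) : k ∈ ℤ} be a locally annihilating bosonic Weyl system on a complex vector space W over S = {b, b*, c, c*} with pairing ⟨b,b*⟩ = ⟨c,c*⟩ = −1, ⟨b*,b⟩ = ⟨c*,c⟩ = 1, and all other pairings 0. Define X⁺(m) := √−1·(:bc*:)(m), X⁻(m) := √−1·(:b*c:)(m), and α(m) := (:bb*:)(m) − (:cc*:)(m). Then for all m, n ∈ ℤ: X⁺(m)X⁻(n) − X⁻(n)X⁺(m) = −α(m+n) + m·δ_{m+n,0}·id. (This is the mode form of the relation [x_i^+(z), x_i^-(w)] = −(α_i(w)δ(z−w) + ∂_wδ(z−w)·K) with K = −1, verified in the proof of Theorem 3.5 for the free-field realization x_i^± of the vertices 1 ≤ i ≤ n−1.) -/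

import Mathlib

noncomputable section

/-- A *bosonic Weyl system* over a set `S` of symbols with pairing `pair : S → S → ℂ`
on a complex vector space `W`: a family of operators `op u k` (`u ∈ S`, `k ∈ ℤ`)
such that `[op u k, op v l] = ⟨u,v⟩ δ_{k+l,0} id`. -/
def IsBosonicWeylSystem {S W : Type*} [AddCommGroup W] [Module ℂ W]
    (pair : S → S → ℂ) (op : S → ℤ → Module.End ℂ W) : Prop :=
  ∀ u v : S, ∀ k l : ℤ,
    op u k * op v l - op v l * op u k =
      if k + l = 0 then pair u v • (1 : Module.End ℂ W) else 0

/-- A family of operators is *locally annihilating* if for every vector `w` and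
every symbol `u`, `op u k w = 0` for all sufficiently large `k`. -/
def LocallyAnnihilating {S W : Type*} [AddCommGroup W] [Module ℂ W]
    (op : S → ℤ → Module.End ℂ W) : Prop :=
  ∀ (w : W) (u : S), ∃ K : ℤ, ∀ k : ℤ, K ≤ k → op u k w = 0

/-- The normally ordered quadratic mode
`(:uv:)(m) = Σ_{j<0} u(j)v(m-j) + Σ_{j≥0} v(m-j)u(j)` applied to a vector `w`;
on a locally annihilating system all but finitely many summands vanish, so the
`finsum` computes the intended (finite) sum. -/
def noMode {S W : Type*} [AddCommGroup W] [Module ℂ W]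
    (op : S → ℤ → Module.End ℂ W) (u v : S) (m : ℤ) (w : W) : W :=
  ∑ᶠ j : ℤ, if j < 0 then op u j (op v (m - j) w) else op v (m - j) (op u j w)

end

/-- The four symbols `b, b*, c, c*`. -/
inductive WSym4 : Type
  | b | bs | c | cs
deriving DecidableEq

/-- The pairing `⟨b,b*⟩ = ⟨c,c*⟩ = -1`, `⟨b*,b⟩ = ⟨c*,c⟩ = 1`, all other pairings `0`. -/
def pair4 : WSym4 → WSym4 → ℂ
  | .b, .bs => -1
  | .c, .cs => -1
  | .bs, .b => 1
  | .cs, .c => 1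
  | _, _ => 0

section
variable {W : Type*} [AddCommGroup W] [Module ℂ W] (op : WSym4 → ℤ → Module.End ℂ W)

/-- `X⁺(m) = √-1 (:bc*:)(m)` (applied to a vector). -/
noncomputable def Xplus (m : ℤ) (w : W) : W := Complex.I • noMode op .b .cs m w

/-- `X⁻(m) = √-1 (:b*c:)(m)` (applied to a vector). -/
noncomputable def Xminus (m : ℤ) (w : W) : W := Complex.I • noMode op .bs .c m w

/-- `α(m) = (:bb*:)(m) - (:cc*:)(m)` (applied to a vector). -/
noncomputable def alMode (m : ℤ) (w : W) : W := noMode op .b .bs m w - noMode op .c .cs m w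

end

/-!
Since `⟨b, c*⟩ = ⟨c*, b⟩ = 0` and `⟨b*, c⟩ = ⟨c, b*⟩ = 0`, normal ordering is immaterial in `X^±`:
on a given vector, `X⁺(m) = i Σ_j b(j) c*(m-j)` and `X⁻(n) = i Σ_k b*(k) c(n-k)`, summed over
finite windows. The bracket of two summands is `δ_{j+k,m+n} b(j) b*(k) - δ_{j+k,0} c(n-k) c*(m-j)`,
so `[X⁺(m), X⁻(n)] = -Σ_j (b(j) b*(m+n-j) - c(n+j) c*(m-j))`. Normally ordering each of these two
sums costs `δ_{m+n,0}` times the number of non-negative indices of its window; the window of the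
`c`-sum is that of the `b`-sum shifted by `n`, so the two costs differ by `n δ_{m+n,0} = -m δ_{m+n,0}`.
-/

open Finset Filter

section WeylSystem

variable {S W : Type*} [AddCommGroup W] [Module ℂ W] {pair : S → S → ℂ}
  {op : S → ℤ → Module.End ℂ W}

theorem IsBosonicWeylSystem.apply_apply (hW : IsBosonicWeylSystem pair op) (u v : S) (k l : ℤ)
    (x : W) :
    op u k (op v l x) = op v l (op u k x) + if k + l = 0 then pair u v • x else 0 := by
  have h := LinearMap.congr_fun (hW u v k l) x
  rw [LinearMap.sub_apply, Module.End.mul_apply, Module.End.mul_apply, sub_eq_iff_eq_add'] at h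
  rw [h]
  split_ifs <;> simp

theorem IsBosonicWeylSystem.commute (hW : IsBosonicWeylSystem pair op) {u v : S}
    (huv : pair u v = 0) (k l : ℤ) : Commute (op u k) (op v l) := by
  have h := hW u v k l
  rwa [huv, zero_smul, ite_self, sub_eq_zero] at h

theorem LocallyAnnihilating.eventually_apply_eq_zero [Finite S] (hA : LocallyAnnihilating op)
    (w : W) : ∀ᶠ k in atTop, ∀ u, op u k w = 0 :=
  eventually_all.2 fun u => eventually_atTop.2 (hA w u)

variable {N : ℤ} {w : W}

theorem noMode_eq_sum (hW : IsBosonicWeylSystem pair op) (hN : 1 ≤ N)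
    (hw : ∀ u k, N ≤ k → op u k w = 0) {u v : S} {r : ℤ} {s : Finset ℤ}
    (hs : Ioo (r - N) N ⊆ s) :
    noMode op u v r w =
      ∑ j ∈ s, if j < 0 then op u j (op v (r - j) w) else op v (r - j) (op u j w) := by
  refine finsum_eq_sum_of_support_subset _ fun j hj => hs ?_
  rw [Function.mem_support] at hj
  rw [mem_Ioo]
  by_contra hout
  refine hj ?_
  split_ifs with hneg
  · rw [hw v (r - j) (by omega), map_zero]
  · by_cases hj : N ≤ j
    · rw [hw u j hj, map_zero]
    -- `0 ≤ j ≤ r - N` forces `r ≠ 0`, so the two modes commute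
    · rw [hW.apply_apply v u, hw v (r - j) (by omega), map_zero, zero_add,
        if_neg (by omega)]

theorem sum_apply_apply_eq_noMode_add (hW : IsBosonicWeylSystem pair op) (hN : 1 ≤ N)
    (hw : ∀ u k, N ≤ k → op u k w = 0) (u v : S) (r : ℤ) {s : Finset ℤ}
    (hs : Ioo (r - N) N ⊆ s) :
    ∑ j ∈ s, op u j (op v (r - j) w) =
      noMode op u v r w + #{j ∈ s | 0 ≤ j} • if r = 0 then pair u v • w else 0 := by
  have hterm : ∀ j, op u j (op v (r - j) w) =
      (if j < 0 then op u j (op v (r - j) w) else op v (r - j) (op u j w)) +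
        if 0 ≤ j then (if r = 0 then pair u v • w else 0) else 0 := by
    intro j
    by_cases hj : j < 0
    · rw [if_pos hj, if_neg (not_le.2 hj), add_zero]
    · rw [if_neg hj, if_pos (not_lt.1 hj), hW.apply_apply u v j (r - j), add_sub_cancel]
  rw [sum_congr rfl fun j _ => hterm j, sum_add_distrib, ← noMode_eq_sum hW hN hw hs,
    ← sum_filter, sum_const]

end WeylSystem

theorem lie_mul_mul_of_commute {R : Type*} [Ring R] {x y z t : R} (hyz : Commute y z)
    (hxt : Commute x t) : ⁅x * y, z * t⁆ = x * z * ⁅y, t⁆ + ⁅x, z⁆ * (t * y) := by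
  have h₁ : x * y * (z * t) = x * z * (y * t) := by
    rw [mul_assoc, ← mul_assoc y, hyz.eq, mul_assoc, ← mul_assoc]
  have h₂ : z * t * (x * y) = z * x * (t * y) := by
    rw [mul_assoc, ← mul_assoc t, ← hxt.eq, mul_assoc, ← mul_assoc]
  simp only [Ring.lie_def, h₁, h₂]
  noncomm_ring

theorem card_filter_nonneg_Ico {a b : ℤ} (ha : a ≤ 0) (hb : 0 ≤ b) :
    (#{j ∈ Ico a b | 0 ≤ j} : ℂ) = b := by
  rw [Ico_filter_le, max_eq_right ha, Int.card_Ico, sub_zero, ← Int.cast_natCast,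
    Int.toNat_of_nonneg hb]

instance : Fintype WSym4 := ⟨{.b, .bs, .c, .cs}, fun u => by cases u <;> simp⟩

section FreeField

variable {W : Type*} [AddCommGroup W] [Module ℂ W] {op : WSym4 → ℤ → Module.End ℂ W}

theorem IsBosonicWeylSystem.lie_eq (hW : IsBosonicWeylSystem pair4 op) (u v : WSym4)
    (k l : ℤ) : ⁅op u k, op v l⁆ = if k + l = 0 then pair4 u v • 1 else 0 := by
  rw [Ring.lie_def, hW u v k l]

variable {N : ℤ} {x : W}

theorem Xplus_eq_sum (hW : IsBosonicWeylSystem pair4 op) (hN : 1 ≤ N)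
    (hx : ∀ u k, N ≤ k → op u k x = 0) (m : ℤ) {s : Finset ℤ} (hs : Ioo (m - N) N ⊆ s) :
    Xplus op m x = (Complex.I • ∑ j ∈ s, op .b j * op .cs (m - j)) x := by
  simp [Xplus, Module.End.mul_apply, sum_apply_apply_eq_noMode_add hW hN hx .b .cs m hs, pair4]

theorem Xminus_eq_sum (hW : IsBosonicWeylSystem pair4 op) (hN : 1 ≤ N)
    (hx : ∀ u k, N ≤ k → op u k x = 0) (n : ℤ) {t : Finset ℤ} (ht : Ioo (n - N) N ⊆ t) :
    Xminus op n x = (Complex.I • ∑ k ∈ t, op .bs k * op .c (n - k)) x := by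
  simp [Xminus, Module.End.mul_apply, sum_apply_apply_eq_noMode_add hW hN hx .bs .c n ht, pair4]

theorem lie_b_mul_cs_bs_mul_c (hW : IsBosonicWeylSystem pair4 op) (m n j k : ℤ) :
    ⁅op .b j * op .cs (m - j), op .bs k * op .c (n - k)⁆ =
      (if k = m + n - j then op .b j * op .bs k else 0) -
        if k = -j then op .c (n - k) * op .cs (m - j) else 0 := by
  rw [lie_mul_mul_of_commute (hW.commute rfl _ _) (hW.commute rfl _ _), hW.lie_eq, hW.lie_eq]
  simp only [show m - j + (n - k) = 0 ↔ k = m + n - j by omega,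
    show j + k = 0 ↔ k = -j by omega]
  split_ifs <;> simp [pair4, sub_eq_add_neg]

theorem lie_sum_b_mul_cs_sum_bs_mul_c (hW : IsBosonicWeylSystem pair4 op) {m n : ℤ}
    {s t : Finset ℤ} (hst : ∀ j ∈ s, m + n - j ∈ t ∧ -j ∈ t) :
    ⁅∑ j ∈ s, op .b j * op .cs (m - j), ∑ k ∈ t, op .bs k * op .c (n - k)⁆ =
      ∑ j ∈ s, (op .b j * op .bs (m + n - j) - op .c (n + j) * op .cs (m - j)) := by
  rw [Ring.lie_def, sum_mul_sum, sum_mul_sum, sum_comm (s := t), ← sum_sub_distrib]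
  refine sum_congr rfl fun j hj => ?_
  rw [← sum_sub_distrib]
  simp only [← Ring.lie_def, lie_b_mul_cs_bs_mul_c hW, sum_sub_distrib, sum_ite_eq',
    if_pos (hst j hj).1, if_pos (hst j hj).2, sub_neg_eq_add]

theorem sum_Ico_apply_eq_alMode_add (hW : IsBosonicWeylSystem pair4 op) (hN : 1 ≤ N)
    (hx : ∀ u k, N ≤ k → op u k x = 0) {m n R : ℤ} (hR : N + m.natAbs + n.natAbs ≤ R) :
    (∑ j ∈ Ico (-R) R, (op .b j * op .bs (m + n - j) - op .c (n + j) * op .cs (m - j))) x =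
      alMode op (m + n) x + if m + n = 0 then (n : ℂ) • x else 0 := by
  have hc : ∑ j ∈ Ico (-R) R, op .c (n + j) (op .cs (m - j) x) =
      ∑ i ∈ Ico (-R + n) (R + n), op .c i (op .cs (m + n - i) x) := by
    rw [← sum_Ico_add]
    exact sum_congr rfl fun j _ => by rw [show m + n - (n + j) = m - j by ring]
  simp only [LinearMap.sum_apply, LinearMap.sub_apply, Module.End.mul_apply, sum_sub_distrib, hc]
  rw [sum_apply_apply_eq_noMode_add hW hN hx .b .bs (m + n)
      (Ioo_subset_Ico_self.trans (Ico_subset_Ico (by omega) (by omega))),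
    sum_apply_apply_eq_noMode_add hW hN hx .c .cs (m + n)
      (Ioo_subset_Ico_self.trans (Ico_subset_Ico (by omega) (by omega))), alMode]
  split_ifs with hmn
  · rw [← Nat.cast_smul_eq_nsmul ℂ, ← Nat.cast_smul_eq_nsmul ℂ,
      card_filter_nonneg_Ico (by omega) (by omega), card_filter_nonneg_Ico (by omega) (by omega)]
    simp only [pair4]
    push_cast
    module
  · simp

end FreeField

/-- for a locally annihilating bosonic Weyl system `{b, b*, c, c*}` as
above, `[X⁺(m), X⁻(n)] = -α(m+n) + m δ_{m+n,0} id` (mode form of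
`[x_i^+(z), x_i^-(w)] = -(α_i(w)δ(z-w) + ∂_wδ(z-w)K)` with `K = -1`). -/
theorem Xplus_Xminus_commutator {W : Type*} [AddCommGroup W] [Module ℂ W]
    (op : WSym4 → ℤ → Module.End ℂ W)
    (hW : IsBosonicWeylSystem pair4 op) (hA : LocallyAnnihilating op)
    (m n : ℤ) (w : W) :
    Xplus op m (Xminus op n w) - Xminus op n (Xplus op m w) =
      -alMode op (m + n) w + (if m + n = 0 then (m : ℂ) • w else 0) := by
  obtain ⟨N, hN⟩ := eventually_atTop.1 <| (eventually_ge_atTop 1).and <|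
    (hA.eventually_apply_eq_zero w).and <|
      (hA.eventually_apply_eq_zero (Xminus op n w)).and (hA.eventually_apply_eq_zero (Xplus op m w))
  have hN1 : 1 ≤ N := (hN N le_rfl).1
  have hw : ∀ u k, N ≤ k → op u k w = 0 := fun u k hk => (hN k hk).2.1 u
  set R := N + m.natAbs + n.natAbs
  -- `X⁻(n)` gets the doubled window so that it contains the partners `m + n - j` and `-j` of
  -- every `j ∈ Ico (-R) R`
  have hP := fun x (hx : ∀ u k, N ≤ k → op u k x = 0) => Xplus_eq_sum hW hN1 hx m
    (Ioo_subset_Ico_self.trans (Ico_subset_Ico (a₂ := -R) (b₂ := R) (by omega) (by omega)))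
  have hQ := fun x (hx : ∀ u k, N ≤ k → op u k x = 0) => Xminus_eq_sum hW hN1 hx n
    (Ioo_subset_Ico_self.trans
      (Ico_subset_Ico (a₂ := -(2 * R)) (b₂ := 2 * R) (by omega) (by omega)))
  rw [hP _ fun u k hk => (hN k hk).2.2.1 u, hQ _ hw, hQ _ fun u k hk => (hN k hk).2.2.2 u,
    hP _ hw]
  calc _ = -⁅∑ j ∈ Ico (-R) R, op .b j * op .cs (m - j),
          ∑ k ∈ Ico (-(2 * R)) (2 * R), op .bs k * op .c (n - k)⁆ w := by
        simp only [Ring.lie_def, LinearMap.smul_apply, map_smul, smul_smul, Complex.I_mul_I,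
          LinearMap.sub_apply, Module.End.mul_apply, neg_one_smul, neg_sub_neg, neg_sub]
    _ = _ := by
        rw [lie_sum_b_mul_cs_sum_bs_mul_c hW fun j hj => by simp only [mem_Ico] at hj ⊢; omega,
          sum_Ico_apply_eq_alMode_add hW hN1 hw le_rfl, neg_add]
        split_ifs with hmn
        · rw [← neg_smul, show -(n : ℂ) = m by exact_mod_cast (by omega : -n = m)]
        · rw [neg_zero]
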